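/- arXiv:2510.17293 — 4 statements merged into one kernel-verified Lean document; each statement's English description precedes it below -/
import Mathlib

section
/- Let n ≥ 1 and let σ be the permutation of {1,…,n+1} with σ(1) = n+1 and σ(k) = k−1 for 2 ≤ k ≤ n+1. Then for every parity function ε : {1,…,n+1} → ℤ/2, (−1)^{σᵒ} = (−1)^{(ε(1)+⋯+ε(n))·ε(n+1)} (the exponent computed as a product of integer representatives). -/
/-! The rotation `σ` is increasing on `{1, …, n}` and sends `0` to the maximum `n`, so its
inversions are exactly the pairs `(0, j)` with `j ≥ 1`. Such a pair is odd iff both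
`ε(n) = ε(σ 0)` and `ε(j - 1) = ε(σ j)` are `1`, so the number of odd inversions is
`∑_{k < n} ε(k) ε(n)` in `ZMod 2`, which is all a sign depends on. -/

open Finset

/-- `(-1)^{σᵒ}`: the signature of the induced permutation `σᵒ` of the odd indices
(with respect to the parity function `ε`), computed as `(-1)` to the number of
inversions of `σ` among positions carrying odd values. -/
def oddSign {n : ℕ} (σ : Equiv.Perm (Fin n)) (ε : Fin n → ZMod 2) : ℤ :=
  (-1 : ℤ) ^ (Finset.univ.filter fun q : Fin n × Fin n =>
      q.1 < q.2 ∧ ε (σ q.1) = 1 ∧ ε (σ q.2) = 1 ∧ σ q.2 < σ q.1).card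

theorem neg_one_pow_eq_of_natCast_eq {R : Type*} [Ring R] {a b : ℕ}
    (h : (a : ZMod 2) = b) : (-1 : R) ^ a = (-1) ^ b := by
  rw [neg_one_pow_eq_pow_mod_two, neg_one_pow_eq_pow_mod_two (n := b),
    (ZMod.natCast_eq_natCast_iff' a b 2).mp h]

theorem ZMod.sum_eq_card_filter_eq_one {ι : Type*} (s : Finset ι) (f : ι → ZMod 2) :
    ∑ i ∈ s, f i = #{i ∈ s | f i = 1} := by
  rw [natCast_card_filter]
  refine sum_congr rfl fun i _ => ?_
  generalize f i = x
  revert x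
  decide

theorem rotateDown_inversion_iff {n : ℕ} {σ : Equiv.Perm (Fin (n + 1))}
    (hσ : ∀ k : Fin (n + 1), (σ k : ℕ) = if (k : ℕ) = 0 then n else (k : ℕ) - 1)
    {i j : Fin (n + 1)} : i < j ∧ σ j < σ i ↔ i = 0 ∧ j ≠ 0 := by
  simp only [Fin.lt_def, ne_eq, Fin.ext_iff, hσ, Fin.val_zero]
  split_ifs <;> omega

theorem card_oddInversions_rotateDown {n : ℕ} {σ : Equiv.Perm (Fin (n + 1))}
    (hσ : ∀ k : Fin (n + 1), (σ k : ℕ) = if (k : ℕ) = 0 then n else (k : ℕ) - 1)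
    (ε : Fin (n + 1) → ZMod 2) :
    #{q : Fin (n + 1) × Fin (n + 1) |
        q.1 < q.2 ∧ ε (σ q.1) = 1 ∧ ε (σ q.2) = 1 ∧ σ q.2 < σ q.1}
      = #{k : Fin n | ε k.castSucc * ε (Fin.last n) = 1} := by
  have hσ_zero : σ 0 = Fin.last n := Fin.ext (by simpa using hσ 0)
  have hσ_succ (k : Fin n) : σ k.succ = k.castSucc := Fin.ext (by simpa using hσ k.succ)
  have mul_eq_one (x y : ZMod 2) : x * y = 1 ↔ x = 1 ∧ y = 1 := by revert x y; decide
  symm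
  apply card_nbij (fun k => ((0 : Fin (n + 1)), k.succ))
  · intro k hk
    simp only [coe_filter, Set.mem_ofPred_eq, mem_univ, true_and, mul_eq_one] at hk ⊢
    refine ⟨Fin.succ_pos k, ?_, ?_, ?_⟩
    · rw [hσ_zero]; exact hk.2
    · rw [hσ_succ]; exact hk.1
    · rw [hσ_zero, hσ_succ]; exact Fin.castSucc_lt_last k
  · intro a _ b _ h
    exact Fin.succ_injective _ (congrArg Prod.snd h)
  · rintro ⟨i, j⟩ hq
    simp only [coe_filter, Set.mem_ofPred_eq, mem_univ, true_and] at hq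
    obtain ⟨hij, hεi, hεj, hσji⟩ := hq
    obtain ⟨rfl, hj⟩ := (rotateDown_inversion_iff hσ).mp ⟨hij, hσji⟩
    rw [← Fin.succ_pred j hj, hσ_succ] at hεj
    rw [hσ_zero] at hεi
    refine ⟨j.pred hj, ?_, by simp⟩
    simpa [mul_eq_one] using ⟨hεj, hεi⟩

theorem oddSign_rotate_down_general (n : ℕ) (σ : Equiv.Perm (Fin (n + 1)))
    (hσ : ∀ k : Fin (n + 1), (σ k : ℕ) = if (k : ℕ) = 0 then n else (k : ℕ) - 1)
    (ε : Fin (n + 1) → ZMod 2) :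
    oddSign σ ε
      = (-1 : ℤ) ^ ((∑ i : Fin n, ε i.castSucc).val * (ε (Fin.last n)).val) := by
  rw [oddSign, card_oddInversions_rotateDown hσ ε]
  apply neg_one_pow_eq_of_natCast_eq
  rw [← ZMod.sum_eq_card_filter_eq_one, ← sum_mul, Nat.cast_mul, ZMod.natCast_zmod_val, ZMod.natCast_zmod_val]

/-- Let `n ≥ 1` and let `σ` be the permutation of `{1,…,n+1}` with `σ(1) = n+1` and
`σ(k) = k−1` for `2 ≤ k ≤ n+1` (written `0`-based on `Fin (n+1)`: `σ(0) = n` and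
`σ(k) = k−1` for `k ≥ 1`).  Then for every parity function `ε`,
`(−1)^{σᵒ} = (−1)^{(ε(1)+⋯+ε(n))·ε(n+1)}`. -/
theorem oddSign_rotate_down (n : ℕ) (hn : 1 ≤ n) (σ : Equiv.Perm (Fin (n + 1)))
    (hσ : ∀ k : Fin (n + 1), (σ k : ℕ) = if (k : ℕ) = 0 then n else (k : ℕ) - 1)
    (ε : Fin (n + 1) → ZMod 2) :
    oddSign σ ε
      = (-1 : ℤ) ^ ((∑ i : Fin n, ε i.castSucc).val * (ε (Fin.last n)).val) :=
  oddSign_rotate_down_general n σ hσ ε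
end

section
/- Let n ≥ 1 and let τ be the permutation of {1,…,n+1} with τ(k) = k+1 for 1 ≤ k ≤ n and τ(n+1) = 1. Then for every parity function ε : {1,…,n+1} → ℤ/2, (−1)^{τᵒ} = (−1)^{(ε(2)+⋯+ε(n+1))·ε(1)} (the exponent computed as a product of integer representatives). -/
/-!
The hypothesis says `τ = finRotate (n + 1)`. Rotation preserves the order of all positions except
the last one, whose image `0` lies below every other value; so the inversions of `τ` are exactly
the pairs `(i, last)` with `i < last`. Such a pair counts for `τᵒ` iff both values `τ i = i + 1`
and `τ last = 0` are odd, so the number of inversions is `#{i | ε (i+1) = 1}` when `ε 0 = 1` and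
zero otherwise, which modulo `2` is `(∑ ε (i+1)) · ε 0`.
-/

open Finset

theorem finRotate_lt_finRotate_iff {n : ℕ} {i j : Fin (n + 1)} (hij : i < j) :
    finRotate (n + 1) j < finRotate (n + 1) i ↔ j = Fin.last n := by
  have hi : i ≠ Fin.last n := (hij.trans_le (Fin.le_last j)).ne
  rw [Fin.lt_def, coe_finRotate, coe_finRotate, if_neg hi]
  split_ifs with hj
  · simpa using hj
  · simpa [hj] using hij.le

theorem card_inversions_finRotate {n : ℕ} (P : Fin (n + 1) → Prop) [DecidablePred P] :
    #{q : Fin (n + 1) × Fin (n + 1) | q.1 < q.2 ∧ P (finRotate _ q.1) ∧ P (finRotate _ q.2) ∧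
        finRotate _ q.2 < finRotate _ q.1} = #{i : Fin n | P i.succ ∧ P 0} := by
  symm
  apply card_bij (fun i _ => (i.castSucc, Fin.last n))
  · intro i hi
    simp only [mem_filter, mem_univ, true_and] at hi ⊢
    have hlt : i.castSucc < Fin.last n := Fin.castSucc_lt_last i
    refine ⟨hlt, ?_, ?_, (finRotate_lt_finRotate_iff hlt).2 rfl⟩
    · simpa [finRotate_last] using hi.1
    · simpa [finRotate_last] using hi.2
  · intro i _ j _ h
    simpa using h
  · rintro ⟨p, q⟩ h
    simp only [mem_filter, mem_univ, true_and] at h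
    obtain ⟨hpq, hp, hq, hinv⟩ := h
    obtain rfl := (finRotate_lt_finRotate_iff hpq).1 hinv
    obtain ⟨i, rfl⟩ := Fin.exists_castSucc_eq.2 hpq.ne
    refine ⟨i, ?_, rfl⟩
    simp only [mem_filter, mem_univ, true_and]
    exact ⟨by simpa using hp, by simpa [finRotate_last] using hq⟩

theorem neg_one_pow_eq_of_cast_zmod_two_eq {m k : ℕ} (h : (m : ZMod 2) = k) :
    (-1 : ℤ) ^ m = (-1 : ℤ) ^ k := by
  rw [neg_one_pow_eq_pow_mod_two, (ZMod.natCast_eq_natCast_iff' m k 2).1 h,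
    ← neg_one_pow_eq_pow_mod_two]

theorem eq_finRotate_of_val_apply {n : ℕ} {τ : Equiv.Perm (Fin (n + 1))}
    (hτ : ∀ k : Fin (n + 1), (τ k : ℕ) = if (k : ℕ) = n then 0 else (k : ℕ) + 1) :
    τ = finRotate (n + 1) := by
  ext k
  rw [hτ, coe_finRotate]
  simp [Fin.ext_iff]

theorem oddSign_rotate_up_general (n : ℕ) (τ : Equiv.Perm (Fin (n + 1)))
    (hτ : ∀ k : Fin (n + 1), (τ k : ℕ) = if (k : ℕ) = n then 0 else (k : ℕ) + 1)
    (ε : Fin (n + 1) → ZMod 2) :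
    oddSign τ ε
      = (-1 : ℤ) ^ ((∑ i : Fin n, ε i.succ).val * (ε 0).val) := by
  have indicator_and : ∀ x y : ZMod 2, (if x = 1 ∧ y = 1 then 1 else 0) = x * y := by decide
  rw [oddSign, eq_finRotate_of_val_apply hτ, card_inversions_finRotate (ε · = 1)]
  apply neg_one_pow_eq_of_cast_zmod_two_eq
  simp only [natCast_card_filter, indicator_and, Nat.cast_mul, ZMod.natCast_val,
    ZMod.cast_id', id, sum_mul]

/-- Let `n ≥ 1` and let `τ` be the permutation of `{1,…,n+1}` with `τ(k) = k+1` for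
`1 ≤ k ≤ n` and `τ(n+1) = 1` (written `0`-based on `Fin (n+1)`: `τ(k) = k+1` for
`k < n` and `τ(n) = 0`).  Then for every parity function `ε`,
`(−1)^{τᵒ} = (−1)^{(ε(2)+⋯+ε(n+1))·ε(1)}`. -/
theorem oddSign_rotate_up (n : ℕ) (hn : 1 ≤ n) (τ : Equiv.Perm (Fin (n + 1)))
    (hτ : ∀ k : Fin (n + 1), (τ k : ℕ) = if (k : ℕ) = n then 0 else (k : ℕ) + 1)
    (ε : Fin (n + 1) → ZMod 2) :
    oddSign τ ε
      = (-1 : ℤ) ^ ((∑ i : Fin n, ε i.succ).val * (ε 0).val) :=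
  oddSign_rotate_up_general n τ hτ ε
end

section
/- Let 1 ≤ p ≤ n, let σ ∈ J_p(1,…,n+1) satisfy σ(p+1) = 1, let c be the (p+1)-cycle on {1,…,n+1} sending j to j+1 for 1 ≤ j ≤ p and p+1 to 1, and set τ̃ = c^{−1} ∘ σ (so τ̃(p+1) = p+1). Let τ be the permutation of {1,…,n} obtained from τ̃ by deleting the fixed point p+1 and relabeling {1,…,n+1}∖{p+1} order-preservingly to {1,…,n}. Let ε : {1,…,n+1} → ℤ/2 be a parity function with ε(p+1) = 0, and let ε' : {1,…,n} → ℤ/2 be the corresponding restriction of ε under the relabeling. Then (−1)^{(σ^{−1})ᵒ} computed with respect to ε equals (−1)^{(τ^{−1})ᵒ} computed with respect to ε'. -/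
open Finset

/-- The set `J_p(1,…,n)` of shuffles: permutations of `{1,…,n}` (here `Fin n`)
increasing on the first `p` positions and on the remaining `n - p` positions. -/
def shuffles (n p : ℕ) : Finset (Equiv.Perm (Fin n)) :=
  Finset.univ.filter fun σ =>
    (∀ i j : Fin n, i < j → (j : ℕ) < p → σ i < σ j) ∧
    (∀ i j : Fin n, i < j → p ≤ (i : ℕ) → σ i < σ j)

/-- Let `1 ≤ p ≤ n`, let `σ ∈ J_p(1,…,n+1)` satisfy `σ(p+1) = 1`, let `c` be the
`(p+1)`-cycle sending `j ↦ j+1` for `1 ≤ j ≤ p` and `p+1 ↦ 1`, and set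
`τ̃ = c⁻¹ ∘ σ` (so `τ̃(p+1) = p+1`).  Let `τ` be the permutation of `{1,…,n}`
obtained from `τ̃` by deleting the fixed point `p+1` and relabelling
`{1,…,n+1}∖{p+1}` order-preservingly to `{1,…,n}` (the order embedding
`Fin.succAbove`).  Let `ε` be a parity function with `ε(p+1) = 0` and `ε'` its
restriction under the relabelling.  Then `(−1)^{(σ⁻¹)ᵒ}` computed w.r.t. `ε` equals
`(−1)^{(τ⁻¹)ᵒ}` computed w.r.t. `ε'`. -/
theorem oddSign_delete_fixed_point_even (n p : ℕ) (hp : 1 ≤ p) (hpn : p ≤ n)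
    (σ : Equiv.Perm (Fin (n + 1))) (hσ : σ ∈ shuffles (n + 1) p)
    (h1 : σ ⟨p, by omega⟩ = ⟨0, by omega⟩)
    (c : Equiv.Perm (Fin (n + 1)))
    (hc : ∀ k : Fin (n + 1), (c k : ℕ) =
      if (k : ℕ) < p then (k : ℕ) + 1 else if (k : ℕ) = p then 0 else (k : ℕ))
    (τ : Equiv.Perm (Fin n))
    (hτ : ∀ j : Fin n,
      (c⁻¹ * σ) ((⟨p, by omega⟩ : Fin (n + 1)).succAbove j)
        = (⟨p, by omega⟩ : Fin (n + 1)).succAbove (τ j))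
    (ε : Fin (n + 1) → ZMod 2) (hε : ε ⟨p, by omega⟩ = 0) :
    oddSign σ⁻¹ ε
      = oddSign τ⁻¹ (fun j => ε ((⟨p, by omega⟩ : Fin (n + 1)).succAbove j)) := by

  have hn1 : p < n + 1 := by omega
  set P : Fin (n + 1) := ⟨p, by omega⟩ with hP
  -- σ⁻¹ 0 = P
  have hσinv0 : σ⁻¹ ⟨0, by omega⟩ = P := by
    rw [Equiv.Perm.inv_eq_iff_eq]; exact h1.symm
  -- value of succAbove
  have hsab : ∀ r : Fin n, ((P.succAbove r : Fin (n + 1)) : ℕ) =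
      if (r : ℕ) < p then (r : ℕ) else (r : ℕ) + 1 := by
    intro r
    rw [Fin.succAbove]
    split_ifs with h h' h'
    · rfl
    · exact absurd (show ((r : Fin n).castSucc : ℕ) < p from h) (by simpa using h')
    · exact absurd h' (by intro hh; apply h; rw [Fin.lt_def]; simpa [hP] using hh)
    · rfl
  -- key: σ⁻¹ r.succ = P.succAbove (τ⁻¹ r)
  have key : ∀ r : Fin n, σ⁻¹ r.succ = P.succAbove (τ⁻¹ r) := by
    intro r
    have h := hτ (τ⁻¹ r)
    rw [show τ (τ⁻¹ r) = r from τ.apply_symm_apply r] at h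
    have h2 : σ (P.succAbove (τ⁻¹ r)) = c (P.succAbove r) := by
      have h' := congrArg c h
      simpa [Equiv.Perm.mul_apply] using h'
    have h3 : c (P.succAbove r) = r.succ := by
      apply Fin.ext
      rw [hc, hsab r]
      rcases lt_or_ge (r : ℕ) p with hr | hr
      · simp [hr, Fin.val_succ]
      · have h4 : ¬ ((r : ℕ) + 1 < p) := by omega
        have h5 : ¬ ((r : ℕ) + 1 = p) := by omega
        simp [hr, not_lt.mpr hr, h4, h5, Fin.val_succ]
    rw [h3] at h2
    exact (Equiv.symm_apply_eq σ).mpr h2.symm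
  -- nonzero of odd positions
  have hne0 : ∀ q : Fin (n + 1), ε (σ⁻¹ q) = 1 → q ≠ ⟨0, by omega⟩ := by
    intro q hq h0
    rw [h0, hσinv0, hε] at hq
    exact absurd hq (by decide)
  unfold oddSign
  congr 1
  symm
  apply Finset.card_bij (fun r _ => (r.1.succ, r.2.succ))
  · rintro ⟨r1, r2⟩ hr
    simp only [Finset.mem_filter, Finset.mem_univ, true_and] at hr ⊢
    obtain ⟨hlt, he1, he2, hord⟩ := hr
    refine ⟨by simpa using hlt, ?_, ?_, ?_⟩
    · rw [key r1]; exact he1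
    · rw [key r2]; exact he2
    · rw [key r1, key r2]
      exact (Fin.strictMono_succAbove P) hord
  · rintro ⟨r1, r2⟩ - ⟨s1, s2⟩ - h
    simp only [Prod.mk.injEq, Fin.succ_inj] at h
    exact Prod.ext h.1 h.2
  · rintro ⟨q1, q2⟩ hq
    simp only [Finset.mem_filter, Finset.mem_univ, true_and] at hq
    obtain ⟨hlt, he1, he2, hord⟩ := hq
    have h10 : q1 ≠ ⟨0, by omega⟩ := hne0 q1 he1
    have h20 : q2 ≠ ⟨0, by omega⟩ := hne0 q2 he2
    have h10' : q1 ≠ 0 := by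
      intro h; apply h10; rw [h]; rfl
    have h20' : q2 ≠ 0 := by
      intro h; apply h20; rw [h]; rfl
    refine ⟨(q1.pred h10', q2.pred h20'), ?_, ?_⟩
    · simp only [Finset.mem_filter, Finset.mem_univ, true_and]
      have e1 : (q1.pred h10').succ = q1 := Fin.succ_pred _ _
      have e2 : (q2.pred h20').succ = q2 := Fin.succ_pred _ _
      refine ⟨?_, ?_, ?_, ?_⟩
      · have := hlt; rw [← e1, ← e2] at this; simpa using this
      · have := he1; rw [← e1, key] at this; exact this
      · have := he2; rw [← e2, key] at this; exact this
      · have := hord; rw [← e1, ← e2, key, key] at this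
        exact (Fin.strictMono_succAbove P).lt_iff_lt.mp this
    · simp [Fin.succ_pred]
end

section
/- Let 2 ≤ p ≤ n, 1 ≤ q ≤ p−1, 1 ≤ i ≤ n, and let σ ∈ J_p(1,…,n+1) satisfy σ(q) = i and σ(q+1) = i+1. Let c₁ be the cycle on {1,…,n+1} sending n+1 to n, n to n−1, …, i+2 to i+1, and i+1 to n+1, and let c₂ be the cycle sending q+1 to q+2, …, n to n+1, and n+1 to q+1. Set τ̃ = c₁ ∘ σ ∘ c₂. Then τ̃(n+1) = n+1, the restriction τ of τ̃ to {1,…,n} lies in J_{p−1}(1,…,n) with τ(q) = i, and the signatures satisfy (−1)^{i}·(−1)^{σ} = (−1)^{q}·(−1)^{τ}. -/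
open Finset

/-!
In `0`-based indexing `c₂ = cycleIcc q n` and `c₁ = (cycleIcc i n)⁻¹`, and
`cycleIcc a n ∘ castSucc = a.succAbove`.  So `τ` is characterised by
`σ ∘ q.succAbove = i.succAbove ∘ τ`: it is `σ` with the position `q` and the value `i = σ q`
deleted.  As `succAbove` is strictly monotone, `τ` inherits the shuffle property, the block
boundary moving down by one because `q` lies in the first block.  The sign follows from
`sign τ = sign c₁ · sign σ · sign c₂ = (-1)^(n-i) · sign σ · (-1)^(n-q)`.
-/

open Equiv Fin

namespace Fin

variable {n : ℕ}

lemma val_cycleIcc_last (i k : Fin (n + 1)) :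
    (cycleIcc i (last n) k : ℕ) =
      if (k : ℕ) < i then (k : ℕ) else if (k : ℕ) = n then (i : ℕ) else (k : ℕ) + 1 := by
  rcases lt_or_ge k i with hki | hik
  · simp [cycleIcc_of_lt hki, hki]
  · rw [cycleIcc_of_le_of_le hik (le_last k), if_neg (not_lt.2 (Fin.le_def.1 hik))]
    by_cases hk : k = last n
    · simp [hk]
    · have hkn : (k : ℕ) ≠ n := fun h => hk (Fin.ext h)
      rw [if_neg hk, if_neg hkn, val_add_one_of_lt' (by simp; omega)]

lemma eq_cycleIcc_last {c : Perm (Fin (n + 1))} {i : Fin (n + 1)}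
    (hc : ∀ k : Fin (n + 1), (c k : ℕ) =
      if (k : ℕ) < i then (k : ℕ) else if (k : ℕ) = n then (i : ℕ) else (k : ℕ) + 1) :
    c = cycleIcc i (last n) := by
  ext k
  rw [hc, val_cycleIcc_last]

lemma inv_eq_cycleIcc_last {c : Perm (Fin (n + 1))} {i : Fin (n + 1)}
    (hc : ∀ k : Fin (n + 1), (c k : ℕ) =
      if (k : ℕ) < i then (k : ℕ) else if (k : ℕ) = i then n else (k : ℕ) - 1) :
    c⁻¹ = cycleIcc i (last n) := by
  refine inv_eq_of_mul_eq_one_right (Perm.ext fun k => Fin.ext ?_)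
  rw [Perm.mul_apply, hc, val_cycleIcc_last, Perm.one_apply]
  have := k.isLt
  split_ifs <;> omega

lemma cycleIcc_last_castSucc (i : Fin (n + 1)) (j : Fin n) :
    cycleIcc i (last n) j.castSucc = i.succAbove j := by
  rw [← succAbove_last_apply, ← Function.comp_apply (f := cycleIcc i (last n)),
    cycleIcc_comp_succAbove i (last n) (le_last i)]

lemma sign_cycleIcc_last (i : Fin (n + 1)) :
    (Perm.sign (cycleIcc i (last n)) : ℤ) = (-1) ^ (n - i) := by
  simp [sign_cycleIcc_of_le (le_last i)]

end Fin

namespace Equiv.Perm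

variable {n : ℕ}

lemma sign_eq_of_castSucc {ρ : Perm (Fin (n + 1))} {τ : Perm (Fin n)}
    (hlast : ρ (last n) = last n) (h : ∀ j, ρ j.castSucc = (τ j).castSucc) :
    sign ρ = sign τ := by
  have hρ : ρ = permCongr finSuccEquivLast.symm τ.optionCongr := by
    ext x
    refine Fin.lastCases ?_ (fun j => ?_) x <;> simp [permCongr_apply, hlast, h]
  rw [hρ, sign_permCongr, optionCongr_sign]

end Equiv.Perm

lemma shuffles_of_comp_succAbove {n p : ℕ} {σ : Perm (Fin (n + 1))} {τ : Perm (Fin n)}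
    (hσ : σ ∈ shuffles (n + 1) p) {q i : Fin (n + 1)} (hqp : (q : ℕ) < p)
    (hστ : ∀ j, σ (q.succAbove j) = i.succAbove (τ j)) : τ ∈ shuffles n (p - 1) := by
  simp only [shuffles, mem_filter, mem_univ, true_and] at hσ ⊢
  have hlt : ∀ a b, σ (q.succAbove a) < σ (q.succAbove b) → τ a < τ b := fun a b h => by
    rwa [hστ, hστ, succAbove_lt_succAbove_iff] at h
  refine ⟨fun a b hab hbp => hlt a b (hσ.1 _ _ (succAbove_lt_succAbove_iff.2 hab) ?_),
    fun a b hab hpa => hlt a b (hσ.2 _ _ (succAbove_lt_succAbove_iff.2 hab) ?_)⟩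
  · unfold succAbove; split_ifs <;> simp <;> omega
  · rw [succAbove_of_le_castSucc _ _ (by rw [Fin.le_def]; simp; omega)]; simp; omega

lemma neg_one_pow_tsub {a b : ℕ} (h : a ≤ b) : (-1 : ℤ) ^ (b - a) = (-1) ^ b * (-1) ^ a := by
  obtain ⟨c, rfl⟩ := Nat.exists_eq_add_of_le h
  rw [Nat.add_sub_cancel_left, pow_add, mul_right_comm, ← pow_add, Even.neg_one_pow ⟨a, rfl⟩,
    one_mul]

/-- Let `2 ≤ p ≤ n`, `1 ≤ q ≤ p−1`, `1 ≤ i ≤ n`, and `σ ∈ J_p(1,…,n+1)` with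
`σ(q) = i` and `σ(q+1) = i+1`.  Let `c₁` be the cycle sending `n+1 ↦ n`,
`n ↦ n−1`, …, `i+2 ↦ i+1`, `i+1 ↦ n+1`, and `c₂` the cycle sending `q+1 ↦ q+2`,
…, `n ↦ n+1`, `n+1 ↦ q+1` (both characterized `0`-based below).  Set
`τ̃ = c₁ ∘ σ ∘ c₂`.  Then `τ̃(n+1) = n+1`, the restriction `τ` of `τ̃` to
`{1,…,n}` lies in `J_{p−1}(1,…,n)` with `τ(q) = i`, and
`(−1)^i·(−1)^σ = (−1)^q·(−1)^τ`. -/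
theorem shuffle_contract_pair (n p q i : ℕ) (hpn : p ≤ n)
    (hq : 1 ≤ q) (hqp : q ≤ p - 1) (hin : i ≤ n)
    (σ : Equiv.Perm (Fin (n + 1))) (hσ : σ ∈ shuffles (n + 1) p)
    (hσq : ((σ ⟨q - 1, by omega⟩ : Fin (n + 1)) : ℕ) = i - 1)
    (hσq1 : ((σ ⟨q, by omega⟩ : Fin (n + 1)) : ℕ) = i)
    (c₁ c₂ : Equiv.Perm (Fin (n + 1)))
    (hc₁ : ∀ k : Fin (n + 1), (c₁ k : ℕ) =
      if (k : ℕ) < i then (k : ℕ) else if (k : ℕ) = i then n else (k : ℕ) - 1)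
    (hc₂ : ∀ k : Fin (n + 1), (c₂ k : ℕ) =
      if (k : ℕ) < q then (k : ℕ) else if (k : ℕ) = n then q else (k : ℕ) + 1) :
    (c₁ * σ * c₂) (Fin.last n) = Fin.last n ∧
    ∀ τ : Equiv.Perm (Fin n),
      (∀ j : Fin n, (c₁ * σ * c₂) j.castSucc = (τ j).castSucc) →
      τ ∈ shuffles n (p - 1) ∧
      ((τ ⟨q - 1, by omega⟩ : Fin n) : ℕ) = i - 1 ∧
      (-1 : ℤ) ^ i * (Equiv.Perm.sign σ : ℤ) = (-1 : ℤ) ^ q * (Equiv.Perm.sign τ : ℤ) := by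
  set q' : Fin (n + 1) := ⟨q, by omega⟩
  set i' : Fin (n + 1) := ⟨i, by omega⟩
  have hc₁' : c₁⁻¹ = cycleIcc i' (last n) := inv_eq_cycleIcc_last hc₁
  have hc₂' : c₂ = cycleIcc q' (last n) := eq_cycleIcc_last hc₂
  have hlast : (c₁ * σ * c₂) (last n) = last n := by
    rw [Perm.mul_apply, Perm.mul_apply, hc₂', cycleIcc_of_last (le_last q'),
      show σ q' = i' from Fin.ext hσq1, ← Perm.eq_inv_iff_eq, hc₁', cycleIcc_of_last (le_last i')]
  refine ⟨hlast, fun τ hτ => ?_⟩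
  have hστ : ∀ j, σ (q'.succAbove j) = i'.succAbove (τ j) := fun j => by
    rw [← cycleIcc_last_castSucc, ← cycleIcc_last_castSucc, ← hc₁', ← hc₂', Perm.eq_inv_iff_eq]
    exact hτ j
  refine ⟨shuffles_of_comp_succAbove hσ (by simp [q']; omega) hστ, ?_, ?_⟩
  · have h : i - 1 = i'.succAbove (τ ⟨q - 1, by omega⟩) := by
      rw [← hσq, ← hστ, succAbove_of_castSucc_lt _ _ (by simp [Fin.lt_def, q']; omega)]
      rfl
    unfold succAbove at h
    split_ifs at h with hlt <;> simp [Fin.lt_def, i'] at h hlt <;> omega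
  · rw [← Perm.sign_eq_of_castSucc hlast hτ, map_mul, map_mul, ← Perm.sign_inv c₁, hc₁', hc₂']
    push_cast
    rw [sign_cycleIcc_last, sign_cycleIcc_last, neg_one_pow_tsub hin,
      neg_one_pow_tsub (by omega : q ≤ n)]
    ring_nf
    simp
end
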